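/- Let 𝔤 = 𝔤⁰_{3.5} ⊕ 𝔤₁ be the 4-dimensional real Lie algebra with basis e₁,...,e₄ and nonzero brackets [e₂,e₃] = e₁ and [e₃,e₁] = e₂. A 4×4 real matrix R equals η·Id + D for some η ∈ ℝ and some derivation D of 𝔤 if and only if R₃₁ = R₄₁ = R₃₂ = R₄₂ = 0, R₁₄ = R₂₄ = R₃₄ = 0, R₂₁ = −R₁₂, and R₂₂ = R₁₁. In this case η = R₃₃. -/

import Mathlib

open Matrix

/-- The Lie bracket of the Lie algebra, in coordinates. -/
def br (x y : Fin 4 → ℝ) : Fin 4 → ℝ :=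
  ![(x 1 * y 2 - x 2 * y 1), (x 2 * y 0 - x 0 * y 2), (0:ℝ), (0:ℝ)]

/-- `D` (acting via `mulVec`) is a derivation of the bracket. -/
def IsDer (D : Matrix (Fin 4) (Fin 4) ℝ) : Prop :=
  ∀ x y : Fin 4 → ℝ, D.mulVec (br x y) = br (D.mulVec x) y + br x (D.mulVec y)

/-!
The derivation identity is linear in `D`; on the basis pairs `(e₂, e₃)`, `(e₃, e₁)`,
`(e₃, e₄)`, `(e₁, e₄)` it already forces the vanishing and symmetry conditions on `D` together
with `D₃₃ = 0` (indices 1-based, so `D₃₃` is `D 2 2`), and conversely these conditions make the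
identity hold for all `x, y`. Adding `η • 1` changes only the diagonal, so the conditions on
`R` are those on `D` with the diagonal ones shifted by `η`, and `D₃₃ = 0` gives `η = R₃₃`.
-/

theorem isDer_iff (D : Matrix (Fin 4) (Fin 4) ℝ) :
    IsDer D ↔
      D 2 0 = 0 ∧ D 3 0 = 0 ∧ D 2 1 = 0 ∧ D 3 1 = 0 ∧ D 0 3 = 0 ∧ D 1 3 = 0 ∧ D 2 3 = 0 ∧
        D 1 0 = -D 0 1 ∧ D 1 1 = D 0 0 ∧ D 2 2 = 0 := by
  constructor
  · intro hD
    have h₁₂ := hD ![0, 1, 0, 0] ![0, 0, 1, 0]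
    have h₂₀ := hD ![0, 0, 1, 0] ![1, 0, 0, 0]
    have h₂₃ := hD ![0, 0, 1, 0] ![0, 0, 0, 1]
    have h₀₃ := hD ![1, 0, 0, 0] ![0, 0, 0, 1]
    simp [br, mulVec, dotProduct, Fin.sum_univ_four, funext_iff, Fin.forall_fin_succ]
      at h₁₂ h₂₀ h₂₃ h₀₃
    obtain ⟨a₀, a₁, a₂, a₃⟩ := h₁₂
    obtain ⟨-, b₁, b₂, b₃⟩ := h₂₀
    obtain ⟨c₀, c₁⟩ := h₂₃
    exact ⟨a₂, a₃, b₂, b₃, c₁.symm, c₀, h₀₃, a₁, by linarith, by linarith⟩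
  · rintro ⟨h20, h30, h21, h31, h03, h13, h23, h10, h11, h22⟩ x y
    funext i
    fin_cases i <;>
      simp [br, mulVec, dotProduct, Fin.sum_univ_four, h20, h30, h21, h31, h03, h13, h23, h10,
        h11, h22] <;> ring

theorem stmt_7 (R : Matrix (Fin 4) (Fin 4) ℝ) :
    ((∃ (η : ℝ) (D : Matrix (Fin 4) (Fin 4) ℝ), IsDer D ∧
        R = η • (1 : Matrix (Fin 4) (Fin 4) ℝ) + D) ↔
      (R 2 0 = 0 ∧ R 3 0 = 0 ∧ R 2 1 = 0 ∧ R 3 1 = 0 ∧ R 0 3 = 0 ∧ R 1 3 = 0 ∧ R 2 3 = 0 ∧ R 1 0 = -R 0 1 ∧ R 1 1 = R 0 0)) ∧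
    (∀ (η : ℝ) (D : Matrix (Fin 4) (Fin 4) ℝ), IsDer D →
      R = η • (1 : Matrix (Fin 4) (Fin 4) ℝ) + D → η = R 2 2) := by
  refine ⟨⟨?_, ?_⟩, ?_⟩
  · rintro ⟨η, D, hD, rfl⟩
    obtain ⟨h20, h30, h21, h31, h03, h13, h23, h10, h11, -⟩ := (isDer_iff D).1 hD
    simp [one_apply, h20, h30, h21, h31, h03, h13, h23, h10, h11]
  · rintro ⟨h20, h30, h21, h31, h03, h13, h23, h10, h11⟩
    refine ⟨R 2 2, R - R 2 2 • 1, (isDer_iff _).2 ?_, by abel⟩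
    simp [one_apply, h20, h30, h21, h31, h03, h13, h23, h10, h11]
  · rintro η D hD rfl
    simp [one_apply, ((isDer_iff D).1 hD).2.2.2.2.2.2.2.2.2]
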